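/- Let Ω ⊆ ℝ^{2n} be open, h ≠ 0 a real number, and φ : Ω → ℝ^{2n} a differentiable map. If there exists a C² function Ĥ : Ω → ℝ such that J⁻¹∇Ĥ(y) = (φ(y) − y)/h for all y ∈ Ω (i.e. the forward-Euler training loss of a Hamiltonian Neural Network vanishes identically on Ω), then the Jacobian of φ satisfies J·Dφ(y) + Dφ(y)ᵀ·J = 2J for every y ∈ Ω. -/

import Mathlib

/-!
On `Ω` the loss identity says `φ = id + h • J⁻¹∇Ĥ`, so `Dφ = 1 + h • J⁻¹ S` with `S` the Hessian of
`Ĥ`, which is symmetric because `Ĥ` is `C²`. As `J` is invertible and skew-symmetric,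
`J (J⁻¹ S) + (J⁻¹ S)ᵀ J = S - S = 0`, so only `J * 1 + 1ᵀ * J = 2 • J` survives.
-/

open Matrix

noncomputable section

/-- Phase space ℝ^{2n}, with coordinates indexed by `Fin n ⊕ Fin n`
(`Sum.inl` = momentum coordinates `p`, `Sum.inr` = position coordinates `q`). -/
abbrev Phase (n : ℕ) := EuclideanSpace ℝ (Fin n ⊕ Fin n)

def toPhase {n : ℕ} (v : (Fin n ⊕ Fin n) → ℝ) : Phase n := WithLp.toLp 2 v

def ofPhase {n : ℕ} (y : Phase n) : (Fin n ⊕ Fin n) → ℝ := y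

/-- The canonical symplectic matrix `J = [[0, I], [-I, 0]]`. -/
def J (n : ℕ) : Matrix (Fin n ⊕ Fin n) (Fin n ⊕ Fin n) ℝ :=
  Matrix.fromBlocks 0 1 (-1) 0

/-- The symplectic gradient (Hamiltonian vector field) `J⁻¹ ∇H`. -/
def sympGrad {n : ℕ} (H : Phase n → ℝ) (y : Phase n) : Phase n :=
  toPhase ((J n)⁻¹.mulVec (ofPhase (gradient H y)))

/-- The Jacobian matrix of a map on phase space. -/
def jacMatrix {n : ℕ} (f : Phase n → Phase n) (y : Phase n) :
    Matrix (Fin n ⊕ Fin n) (Fin n ⊕ Fin n) ℝ :=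
  Matrix.of fun i j => ofPhase (fderiv ℝ f y (EuclideanSpace.single j 1)) i

open InnerProductSpace Filter Topology

namespace Matrix

variable {ι K : Type*} [Fintype ι] [DecidableEq ι] [CommRing K]

theorem transpose_nonsing_inv_mul_of_transpose_eq_neg {A : Matrix ι ι K} (hA : IsUnit A.det)
    (hAT : Aᵀ = -A) : A⁻¹ᵀ * A = -1 := by
  calc A⁻¹ᵀ * A = Aᵀ⁻¹ * -Aᵀ := by rw [transpose_nonsing_inv, hAT, neg_neg]
    _ = -1 := by rw [Matrix.mul_neg, nonsing_inv_mul _ (by rwa [det_transpose])]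

theorem mul_one_add_smul_inv_mul_add_transpose_mul {A S : Matrix ι ι K} (hA : IsUnit A.det)
    (hAT : Aᵀ = -A) (hS : S.IsSymm) (c : K) :
    A * (1 + c • (A⁻¹ * S)) + (1 + c • (A⁻¹ * S))ᵀ * A = (2 : K) • A := by
  have hAS : (A⁻¹ * S)ᵀ * A = -S := by
    rw [transpose_mul, hS.eq, Matrix.mul_assoc,
      transpose_nonsing_inv_mul_of_transpose_eq_neg hA hAT, Matrix.mul_neg, Matrix.mul_one]
  rw [transpose_add, transpose_one, transpose_smul, Matrix.add_mul, Matrix.smul_mul, hAS,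
    Matrix.mul_add, Matrix.mul_smul, mul_nonsing_inv_cancel_left A S hA, Matrix.mul_one,
    Matrix.one_mul]
  module

end Matrix

theorem J_eq_neg_matrixJ (n : ℕ) : J n = -Matrix.J (Fin n) ℝ := by
  rw [_root_.J, Matrix.J, fromBlocks_neg]
  simp

theorem J_transpose (n : ℕ) : (J n)ᵀ = -J n := by
  rw [J_eq_neg_matrixJ, transpose_neg, Matrix.J_transpose]

theorem isUnit_det_J (n : ℕ) : IsUnit (J n).det := by
  rw [J_eq_neg_matrixJ]
  exact isUnit_det_of_right_inverse (B := Matrix.J (Fin n) ℝ)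
    (by rw [Matrix.neg_mul, J_squared, neg_neg])

section Gradient

variable {E : Type*} [NormedAddCommGroup E] [InnerProductSpace ℝ E] [CompleteSpace E]

theorem hasFDerivAt_gradient {H : E → ℝ} {y : E} (hH : DifferentiableAt ℝ (fderiv ℝ H) y) :
    HasFDerivAt (gradient H)
      ((toDual ℝ E).symm.toContinuousLinearEquiv.toContinuousLinearMap ∘L
        fderiv ℝ (fderiv ℝ H) y) y :=
  (toDual ℝ E).symm.toContinuousLinearEquiv.hasFDerivAt.comp y hH.hasFDerivAt

end Gradient

section EuclideanSpace

variable {ι : Type*} [Fintype ι] [DecidableEq ι]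

theorem EuclideanSpace.toDual_symm_apply (L : StrongDual ℝ (EuclideanSpace ℝ ι)) (k : ι) :
    (toDual ℝ (EuclideanSpace ℝ ι)).symm L k = L (EuclideanSpace.single k 1) := by
  rw [← InnerProductSpace.toDual_symm_apply, EuclideanSpace.inner_single_right, one_mul,
    conj_trivial]

theorem Matrix.toEuclideanCLM_symm_apply (L : EuclideanSpace ℝ ι →L[ℝ] EuclideanSpace ℝ ι)
    (i j : ι) :
    (toEuclideanCLM (𝕜 := ℝ) (n := ι)).symm L i j = L (EuclideanSpace.single j 1) i := by
  simp [toEuclideanCLM, LinearMap.toMatrixOrthonormal, LinearMap.toMatrix_apply]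

-- Column `j` is the derivative of `∇H` along `e j`, so this is the Jacobian of `∇H` on the nose.
def hessianMatrix (H : EuclideanSpace ℝ ι → ℝ) (y : EuclideanSpace ℝ ι) : Matrix ι ι ℝ :=
  of fun i j => fderiv ℝ (fderiv ℝ H) y (EuclideanSpace.single j 1) (EuclideanSpace.single i 1)

theorem ContDiffAt.isSymm_hessianMatrix {H : EuclideanSpace ℝ ι → ℝ} {y : EuclideanSpace ℝ ι}
    (hH : ContDiffAt ℝ 2 H y) : (hessianMatrix H y).IsSymm :=
  IsSymm.ext fun i j =>
    hH.isSymmSndFDerivAt (by simp [minSmoothness_of_isRCLikeNormedField]) _ _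

theorem toEuclideanCLM_symm_fderiv_gradient {H : EuclideanSpace ℝ ι → ℝ}
    {y : EuclideanSpace ℝ ι} (hH : DifferentiableAt ℝ (fderiv ℝ H) y) :
    (toEuclideanCLM (𝕜 := ℝ) (n := ι)).symm (fderiv ℝ (gradient H) y) = hessianMatrix H y := by
  ext i j
  rw [toEuclideanCLM_symm_apply, (hasFDerivAt_gradient hH).fderiv]
  exact EuclideanSpace.toDual_symm_apply _ i

end EuclideanSpace

theorem jacMatrix_eq_toEuclideanCLM_symm {n : ℕ} (f : Phase n → Phase n) (y : Phase n) :
    jacMatrix f y = (toEuclideanCLM (𝕜 := ℝ) (n := Fin n ⊕ Fin n)).symm (fderiv ℝ f y) := by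
  ext i j
  rw [toEuclideanCLM_symm_apply]
  rfl

theorem Filter.EventuallyEq.jacMatrix_eq {n : ℕ} {f g : Phase n → Phase n} {y : Phase n}
    (h : f =ᶠ[𝓝 y] g) : jacMatrix f y = jacMatrix g y := by
  simp only [jacMatrix, h.fderiv_eq]

theorem jacMatrix_add_smul_sympGrad {n : ℕ} {H : Phase n → ℝ} {y : Phase n}
    (hH : DifferentiableAt ℝ (fderiv ℝ H) y) (c : ℝ) :
    jacMatrix (fun z => z + c • sympGrad H z) y = 1 + c • ((J n)⁻¹ * hessianMatrix H y) := by
  have hderiv : HasFDerivAt (fun z => z + c • sympGrad H z)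
      (1 + c • (toEuclideanCLM (𝕜 := ℝ) (J n)⁻¹ * fderiv ℝ (gradient H) y)) y :=
    (hasFDerivAt_id y).add (((toEuclideanCLM (𝕜 := ℝ) (J n)⁻¹).hasFDerivAt.comp y
      (hasFDerivAt_gradient hH).differentiableAt.hasFDerivAt).const_smul c)
  rw [jacMatrix_eq_toEuclideanCLM_symm, hderiv.fderiv, map_add, map_one, map_smul, map_mul,
    StarAlgEquiv.symm_apply_apply, toEuclideanCLM_symm_fderiv_gradient hH]

theorem stmt1 (n : ℕ) (Ω : Set (Phase n)) (hΩ : IsOpen Ω) (h : ℝ) (hh : h ≠ 0)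
    (φ : Phase n → Phase n)
    (H : Phase n → ℝ) (hH : ContDiffOn ℝ 2 H Ω)
    (hloss : ∀ y ∈ Ω, sympGrad H y = h⁻¹ • (φ y - y)) :
    ∀ y ∈ Ω, J n * jacMatrix φ y + (jacMatrix φ y)ᵀ * J n = (2 : ℝ) • J n := by
  intro y hy
  have hH2 : ContDiffAt ℝ 2 H y := hH.contDiffAt (hΩ.mem_nhds hy)
  have hφ : φ =ᶠ[𝓝 y] fun z => z + h • sympGrad H z := by
    filter_upwards [hΩ.mem_nhds hy] with z hz
    rw [hloss z hz, smul_inv_smul₀ hh, add_sub_cancel]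
  rw [hφ.jacMatrix_eq, jacMatrix_add_smul_sympGrad
    ((hH2.fderiv_right (m := 1) le_rfl).differentiableAt one_ne_zero)]
  exact mul_one_add_smul_inv_mul_add_transpose_mul (isUnit_det_J n) (J_transpose n)
    hH2.isSymm_hessianMatrix h
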